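/- Assume hypotheses (EC) and (UC). (i) For every τ ∈ [0,T) and r ∈ (0,r_T), every optimal control to (NP)^{τ,r} is an optimal control to (TP)^{M(τ,r),r}. (ii) For every r ∈ (0,r_T) and M ≥ M(0,r), every optimal control to (TP)^{M,r} is an optimal control to (NP)^{τ(M,r),r}; furthermore (TP)^{M,r} has the bang-bang property (every optimal control u* satisfies ‖u*(t)‖ = M for a.e. t ∈ (τ(M,r),T)) and its optimal control is unique (any two optimal controls coincide a.e. on (τ(M,r),T)). -/

import Mathlib

open MeasureTheory Set Filter Topology

noncomputable section

variable {H : Type*} [NormedAddCommGroup H] [InnerProductSpace ℂ H] [CompleteSpace H]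
  [SecondCountableTopology H]

/-- `U` is a strongly continuous one-parameter group of unitary operators on `H`,
abstracting the Schrödinger group `e^{-iΔt}`. -/
def IsUnitaryGroup (U : ℝ → H →L[ℂ] H) : Prop :=
  U 0 = ContinuousLinearMap.id ℂ H ∧
  (∀ s t : ℝ, U (s + t) = (U s).comp (U t)) ∧
  (∀ (t : ℝ) (x : H), ‖U t x‖ = ‖x‖) ∧
  ∀ x : H, Continuous fun t : ℝ => U t x

/-- `B` is a nonzero orthogonal projection on `H`, abstracting multiplication by `χ_ω`. -/
def IsOrthProj (B : H →L[ℂ] H) : Prop :=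
  B ≠ 0 ∧ B.comp B = B ∧ ∀ x y : H, (inner ℂ (B x) y : ℂ) = inner ℂ x (B y)

/-- Membership in `L∞((a,b);H)`. -/
def MemLinfty (u : ℝ → H) (a b : ℝ) : Prop :=
  AEStronglyMeasurable u (volume : Measure ℝ) ∧
    ∃ c : ℝ, ∀ᵐ t : ℝ ∂volume, t ∈ Ioo a b → ‖u t‖ ≤ c

/-- Membership in `L∞((0,∞);H)`. -/
def MemLinftyInf (u : ℝ → H) : Prop :=
  AEStronglyMeasurable u (volume : Measure ℝ) ∧
    ∃ c : ℝ, ∀ᵐ t : ℝ ∂volume, t ∈ Ioi (0 : ℝ) → ‖u t‖ ≤ c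

/-- The `L∞((a,b);H)` norm of `u`. -/
def supNorm (u : ℝ → H) (a b : ℝ) : ℝ :=
  sInf {c : ℝ | 0 ≤ c ∧ ∀ᵐ t : ℝ ∂volume, t ∈ Ioo a b → ‖u t‖ ≤ c}

/-- `stateT U B T τ u y₀ = y(T; χ_{(τ,T)}u, y₀)`, the mild solution at time `T` of the
controlled Schrödinger equation with initial state `y₀`, the control acting on `(τ,T)`:
`y(T) = U(T)y₀ + ∫_τ^T U(T-s) B u(s) ds`.  The free state at time `t` starting from `y₀`
with control `u` active from time `0` is `stateT U B t 0 u y₀`. -/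
def stateT (U : ℝ → H →L[ℂ] H) (B : H →L[ℂ] H) (T τ : ℝ) (u : ℝ → H) (y₀ : H) : H :=
  U T y₀ + ∫ s in Ioo τ T, U (T - s) (B (u s))

/-- Hypothesis (EC): `L∞`-exact controllability with cost. -/
def EC (U : ℝ → H →L[ℂ] H) (B : H →L[ℂ] H) : Prop :=
  ∀ τ : ℝ, 0 < τ → ∃ C : ℝ, 0 < C ∧ ∀ y₀ z : H, ∃ u : ℝ → H,
    AEStronglyMeasurable u (volume : Measure ℝ) ∧
    (∀ᵐ t : ℝ ∂volume, t ∈ Ioo 0 τ → ‖u t‖ ≤ C * ‖z - U τ y₀‖) ∧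
    stateT U B τ 0 u y₀ = z

/-- Hypothesis (UC): unique continuation. -/
def UC (U : ℝ → H →L[ℂ] H) (B : H →L[ℂ] H) : Prop :=
  ∀ η : H, η ≠ 0 → volume {t : ℝ | B (U t η) = 0} = 0

/-- The admissible set `U_M` of the minimal time problem `(TOCP)_M`. -/
def UMset (U : ℝ → H →L[ℂ] H) (B : H →L[ℂ] H) (y₀ : H) (M : ℝ) : Set (ℝ → H) :=
  {u | MemLinftyInf u ∧ (∀ᵐ t : ℝ ∂volume, t ∈ Ioi (0 : ℝ) → ‖u t‖ ≤ M) ∧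
    ∃ s : ℝ, 0 < s ∧ stateT U B s 0 u y₀ = 0}

/-- The minimal time `T_M` of `(TOCP)_M`. -/
def Tmin (U : ℝ → H →L[ℂ] H) (B : H →L[ℂ] H) (y₀ : H) (M : ℝ) : ℝ :=
  sInf {s : ℝ | 0 < s ∧ ∃ u ∈ UMset U B y₀ M, stateT U B s 0 u y₀ = 0}

/-- The admissible set `V_T` of the minimal norm problem `(NOCP)_T`. -/
def VTset (U : ℝ → H →L[ℂ] H) (B : H →L[ℂ] H) (y₀ : H) (T : ℝ) : Set (ℝ → H) :=
  {v | MemLinfty v 0 T ∧ stateT U B T 0 v y₀ = 0}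

/-- The minimal norm `M_T` of `(NOCP)_T`. -/
def Mmin (U : ℝ → H →L[ℂ] H) (B : H →L[ℂ] H) (y₀ : H) (T : ℝ) : ℝ :=
  sInf ((fun v : ℝ → H => supNorm v 0 T) '' VTset U B y₀ T)

/-- Hypothesis (BB): bang-bang property of the minimal time problems. -/
def BB (U : ℝ → H →L[ℂ] H) (B : H →L[ℂ] H) : Prop :=
  ∀ y₀ : H, y₀ ≠ 0 → ∀ M : ℝ, 0 < M → ∀ u ∈ UMset U B y₀ M,
    stateT U B (Tmin U B y₀ M) 0 u y₀ = 0 →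
    ∀ᵐ t : ℝ ∂volume, t ∈ Ioo 0 (Tmin U B y₀ M) → ‖u t‖ = M

/-- Hypothesis (ET): existence of optimal controls for the minimal time problems. -/
def ET (U : ℝ → H →L[ℂ] H) (B : H →L[ℂ] H) : Prop :=
  ∀ y₀ : H, y₀ ≠ 0 → ∀ M : ℝ, 0 < M →
    ∃ u ∈ UMset U B y₀ M, stateT U B (Tmin U B y₀ M) 0 u y₀ = 0

/-- The admissible set `U_{M,τ}`. -/
def UadmSet (M τ T : ℝ) : Set (ℝ → H) :=
  {u | MemLinfty u 0 T ∧ ∀ᵐ t : ℝ ∂volume, t ∈ Ioo τ T → ‖u t‖ ≤ M}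

/-- The optimal distance `r(M,τ)` of the optimal target problem `(OP)^{M,τ}`. -/
def rOP (U : ℝ → H →L[ℂ] H) (B : H →L[ℂ] H) (y₀ z_d : H) (T M τ : ℝ) : ℝ :=
  sInf ((fun u : ℝ → H => ‖stateT U B T τ u y₀ - z_d‖) '' UadmSet M τ T)

/-- `u` is an optimal control to `(OP)^{M,τ}`. -/
def IsOptOP (U : ℝ → H →L[ℂ] H) (B : H →L[ℂ] H) (y₀ z_d : H) (T M τ : ℝ) (u : ℝ → H) :
    Prop :=
  u ∈ UadmSet M τ T ∧ ‖stateT U B T τ u y₀ - z_d‖ = rOP U B y₀ z_d T M τ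

/-- `M^τ`, the minimal norm for exact steering to the target `z_d`. -/
def Mtau (U : ℝ → H →L[ℂ] H) (B : H →L[ℂ] H) (y₀ z_d : H) (T τ : ℝ) : ℝ :=
  sInf ((fun u : ℝ → H => supNorm u τ T) ''
    {u : ℝ → H | MemLinfty u 0 T ∧ stateT U B T τ u y₀ = z_d})

/-- The admissible set `W_{τ,r}` of the optimal norm problem `(NP)^{τ,r}`. -/
def WadmSet (U : ℝ → H →L[ℂ] H) (B : H →L[ℂ] H) (y₀ z_d : H) (T τ r : ℝ) :
    Set (ℝ → H) :=
  {u | MemLinfty u 0 T ∧ ‖stateT U B T τ u y₀ - z_d‖ ≤ r}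

/-- The optimal norm `M(τ,r)` of `(NP)^{τ,r}`. -/
def MNP (U : ℝ → H →L[ℂ] H) (B : H →L[ℂ] H) (y₀ z_d : H) (T τ r : ℝ) : ℝ :=
  sInf ((fun u : ℝ → H => supNorm u τ T) '' WadmSet U B y₀ z_d T τ r)

/-- `u` is an optimal control to `(NP)^{τ,r}`. -/
def IsOptNP (U : ℝ → H →L[ℂ] H) (B : H →L[ℂ] H) (y₀ z_d : H) (T τ r : ℝ) (u : ℝ → H) :
    Prop :=
  u ∈ WadmSet U B y₀ z_d T τ r ∧ supNorm u τ T = MNP U B y₀ z_d T τ r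

/-- The admissible set `V_{M,r}` of the second type optimal time problem `(TP)^{M,r}`. -/
def VadmSet (U : ℝ → H →L[ℂ] H) (B : H →L[ℂ] H) (y₀ z_d : H) (T M r : ℝ) :
    Set (ℝ → H) :=
  {u | ∃ τ : ℝ, τ ∈ Ico (0 : ℝ) T ∧ u ∈ UadmSet M τ T ∧
    ‖stateT U B T τ u y₀ - z_d‖ ≤ r}

/-- `τ_{M,r}(u)`. -/
def tauOf (U : ℝ → H →L[ℂ] H) (B : H →L[ℂ] H) (y₀ z_d : H) (T r : ℝ) (u : ℝ → H) : ℝ :=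
  sSup {τ : ℝ | τ ∈ Ico (0 : ℝ) T ∧ ‖stateT U B T τ u y₀ - z_d‖ ≤ r}

/-- The optimal time `τ(M,r)` of `(TP)^{M,r}`. -/
def tauTP (U : ℝ → H →L[ℂ] H) (B : H →L[ℂ] H) (y₀ z_d : H) (T M r : ℝ) : ℝ :=
  sSup (tauOf U B y₀ z_d T r '' VadmSet U B y₀ z_d T M r)

/-- `u` is an optimal control to `(TP)^{M,r}`. -/
def IsOptTP (U : ℝ → H →L[ℂ] H) (B : H →L[ℂ] H) (y₀ z_d : H) (T M r : ℝ) (u : ℝ → H) :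
    Prop :=
  u ∈ VadmSet U B y₀ z_d T M r ∧
    ‖stateT U B T (tauTP U B y₀ z_d T M r) u y₀ - z_d‖ ≤ r

/-- The adjoint state `φ*(t) = U(t-T)(z_d - y(T; χ_{(τ,T)}u, y₀))`. -/
def adjState (U : ℝ → H →L[ℂ] H) (B : H →L[ℂ] H) (y₀ z_d : H) (T τ : ℝ) (u : ℝ → H)
    (t : ℝ) : H :=
  U (t - T) (z_d - stateT U B T τ u y₀)

/-!
Exact controllability makes the optimal norm strictly decreasing in the starting time: a control
reaching `B(z_d, r)` from `b` can be scaled by some `l < 1`, and the missing part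
`(1 - l) (z_d - U T y₀)` of the final state can be produced on `(a, b)` at arbitrarily small cost.
So a control of norm `M(τ, r)` cannot reach the ball from any time later than `τ`, which is (i).

For (ii), let `τ* = τ(M, r)`. Nothing of norm `≤ M` reaches the ball from a time later than `τ*`.
With exact controllability this gives `M(τ*, r) = M`; since the final state depends Lipschitz
continuously on the starting time, it also shows that no control of norm `≤ M` on `(τ*, T)` reaches
the open ball. The final state of an optimal control `u` is then the point of the convex reachable
set nearest to `z_d`, and the supporting hyperplane with normal `η = z_d - y(T)` gives the maximum
principle `∫ re ⟪φ, g⟫ ≤ ∫ re ⟪φ, u⟫` for the adjoint state `φ(t) = B U(t - T) η`. Unique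
continuation makes `φ ≠ 0` a.e., which forces `‖u(t)‖ = M`. The midpoint of two optimal controls is
optimal, so by strict convexity of the norm the two controls agree.
-/

open scoped InnerProductSpace

theorem re_inner_le_zero_of_forall_norm_sub_le {F : Type*} [NormedAddCommGroup F]
    [InnerProductSpace ℂ F] {S : Set F} (hS : Convex ℝ S) {y z : F} (hy : y ∈ S)
    (hmin : ∀ x ∈ S, ‖z - y‖ ≤ ‖z - x‖) {x : F} (hx : x ∈ S) :
    RCLike.re ⟪z - y, x - y⟫_ℂ ≤ 0 := by
  let _ : InnerProductSpace ℝ F := InnerProductSpace.rclikeToReal ℂ F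
  have : Nonempty S := ⟨⟨y, hy⟩⟩
  rw [← real_inner_eq_re_inner]
  refine (norm_eq_iInf_iff_real_inner_le_zero hS hy).1 ?_ x hx
  have hbdd : BddBelow (range fun w : S => ‖z - (w : F)‖) :=
    ⟨0, forall_mem_range.2 fun _ => norm_nonneg _⟩
  exact le_antisymm (le_ciInf fun w => hmin w w.2) (ciInf_le hbdd ⟨y, hy⟩)

theorem norm_div_norm_smul_self_le {F : Type*} [NormedAddCommGroup F] [NormedSpace ℝ F]
    {c : ℝ} (hc : 0 ≤ c) (x : F) : ‖(c / ‖x‖) • x‖ ≤ c := by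
  rcases eq_or_ne x 0 with rfl | hx
  · simpa using hc
  · rw [norm_smul_of_nonneg (by positivity), div_mul_cancel₀ _ (norm_ne_zero_iff.2 hx)]

theorem re_inner_div_norm_smul_self {F : Type*} [NormedAddCommGroup F] [InnerProductSpace ℂ F]
    (c : ℝ) (x : F) : RCLike.re ⟪x, (c / ‖x‖) • x⟫_ℂ = c * ‖x‖ := by
  rcases eq_or_ne x 0 with rfl | hx
  · simp
  · rw [← Complex.coe_smul, inner_smul_right, ← RCLike.ofReal_eq_complex_ofReal,
      RCLike.re_ofReal_mul, inner_self_eq_norm_sq]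
    field_simp [norm_ne_zero_iff.2 hx]

section Evolution

variable {E : Type*} [NormedAddCommGroup E] [InnerProductSpace ℂ E]
  {U : ℝ → E →L[ℂ] E} {B : E →L[ℂ] E}

namespace IsUnitaryGroup

variable (hU : IsUnitaryGroup U)
include hU

theorem apply_apply (s t : ℝ) (x : E) : U s (U t x) = U (s + t) x := by
  rw [hU.2.1 s t]; rfl

theorem apply_neg_apply (t : ℝ) (x : E) : U t (U (-t) x) = x := by
  rw [hU.apply_apply, add_neg_cancel, hU.1]; rfl

theorem norm_apply (t : ℝ) (x : E) : ‖U t x‖ = ‖x‖ := hU.2.2.1 t x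

def toLinearIsometry (t : ℝ) : E →ₗᵢ[ℂ] E := ⟨(U t).toLinearMap, hU.norm_apply t⟩

theorem inner_apply_right (t : ℝ) (η x : E) : ⟪η, U t x⟫_ℂ = ⟪U (-t) η, x⟫_ℂ := by
  rw [← (hU.toLinearIsometry t).inner_map_map (U (-t) η) x]
  exact congrArg (⟪·, U t x⟫_ℂ) (hU.apply_neg_apply t η).symm

theorem continuous_uncurry : Continuous fun p : ℝ × E => U p.1 p.2 :=
  continuous_prod_of_continuous_lipschitzWith' _ 1
    (fun t => LipschitzWith.of_dist_le_mul fun x y => by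
      rw [dist_eq_norm, dist_eq_norm, ← map_sub, hU.norm_apply, NNReal.coe_one, one_mul])
    hU.2.2.2

end IsUnitaryGroup

end Evolution

section SupNorm

variable {E : Type*} [NormedAddCommGroup E] {u : ℝ → E} {a b c : ℝ}

theorem supNorm_nonneg (u : ℝ → E) (a b : ℝ) : 0 ≤ supNorm u a b :=
  Real.sInf_nonneg fun _ hc => hc.1

theorem supNorm_le (hc : 0 ≤ c) (h : ∀ᵐ t, t ∈ Ioo a b → ‖u t‖ ≤ c) : supNorm u a b ≤ c :=
  csInf_le ⟨0, fun _ hx => hx.1⟩ ⟨hc, h⟩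

theorem MemLinfty.ae_le_supNorm (h : MemLinfty u 0 b) (ha : 0 ≤ a) :
    ∀ᵐ t, t ∈ Ioo a b → ‖u t‖ ≤ supNorm u a b := by
  obtain ⟨c, hc⟩ := h.2
  have hne : {c : ℝ | 0 ≤ c ∧ ∀ᵐ t, t ∈ Ioo a b → ‖u t‖ ≤ c}.Nonempty :=
    ⟨max c 0, le_max_right _ _, hc.mono fun t ht hmem =>
      (ht ⟨ha.trans_lt hmem.1, hmem.2⟩).trans (le_max_left _ _)⟩
  obtain ⟨x, -, hx, hxS⟩ := exists_seq_tendsto_sInf hne ⟨0, fun _ hc => hc.1⟩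
  filter_upwards [ae_all_iff.2 fun n => (hxS n).2] with t ht hmem
  exact ge_of_tendsto' hx fun n => ht n hmem

end SupNorm

section Duhamel

variable {E : Type*} [NormedAddCommGroup E] [InnerProductSpace ℂ E]
  {U : ℝ → E →L[ℂ] E} {B : E →L[ℂ] E} {u u₁ u₂ : ℝ → E} {y₀ : E} {T τ a b K : ℝ}

theorem aestronglyMeasurable_duhamel (hU : IsUnitaryGroup U) (hu : AEStronglyMeasurable u) :
    AEStronglyMeasurable fun s => U (T - s) (B (u s)) :=
  hU.continuous_uncurry.comp_aestronglyMeasurable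
    ((continuous_const.sub continuous_id).aestronglyMeasurable.prodMk
      (B.continuous.comp_aestronglyMeasurable hu))

theorem ae_norm_duhamel_le (hU : IsUnitaryGroup U) (hb : ∀ᵐ s, s ∈ Ioo a b → ‖u s‖ ≤ K) :
    ∀ᵐ s ∂volume.restrict (Ioo a b), ‖U (T - s) (B (u s))‖ ≤ ‖B‖ * K := by
  rw [ae_restrict_iff' measurableSet_Ioo]
  filter_upwards [hb] with s hs hmem
  rw [hU.norm_apply]
  exact (B.le_opNorm _).trans (mul_le_mul_of_nonneg_left (hs hmem) (norm_nonneg B))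

theorem integrableOn_duhamel (hU : IsUnitaryGroup U) (hu : AEStronglyMeasurable u)
    (hb : ∀ᵐ s, s ∈ Ioo a b → ‖u s‖ ≤ K) :
    IntegrableOn (fun s => U (T - s) (B (u s))) (Ioo a b) :=
  Integrable.mono' (integrableOn_const measure_Ioo_lt_top.ne)
    (aestronglyMeasurable_duhamel hU hu).restrict (ae_norm_duhamel_le hU hb)

theorem norm_integral_duhamel_le (hU : IsUnitaryGroup U) (hb : ∀ᵐ s, s ∈ Ioo a b → ‖u s‖ ≤ K)
    (hab : a ≤ b) : ‖∫ s in Ioo a b, U (T - s) (B (u s))‖ ≤ ‖B‖ * K * (b - a) := by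
  simpa [Real.volume_real_Ioo_of_le hab] using
    norm_setIntegral_le_of_norm_le_const_ae measure_Ioo_lt_top (ae_norm_duhamel_le hU hb)

theorem integral_duhamel_indicator {c : ℝ} (h : Ioo b c ⊆ Ioo a T) :
    ∫ s in Ioo a T, U (T - s) (B ((Ioo b c).indicator u s)) =
      ∫ s in Ioo b c, U (T - s) (B (u s)) := by
  have hpt : ∀ s, U (T - s) (B ((Ioo b c).indicator u s)) =
      (Ioo b c).indicator (fun s => U (T - s) (B (u s))) s := fun s => by
    by_cases hs : s ∈ Ioo b c <;> simp [hs]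
  simp only [hpt, setIntegral_indicator measurableSet_Ioo, inter_eq_right.2 h]

theorem stateT_indicator (hab : a ≤ b) :
    stateT U B T a ((Ioo b T).indicator u) y₀ = stateT U B T b u y₀ := by
  rw [stateT, integral_duhamel_indicator (Ioo_subset_Ioo_left hab), stateT]

theorem norm_stateT_sub_free_le (hU : IsUnitaryGroup U)
    (hb : ∀ᵐ s, s ∈ Ioo τ T → ‖u s‖ ≤ K) (hτT : τ ≤ T) :
    ‖stateT U B T τ u y₀ - U T y₀‖ ≤ ‖B‖ * K * (T - τ) := by
  rw [stateT, add_sub_cancel_left]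
  exact norm_integral_duhamel_le hU hb hτT

theorem stateT_sub_stateT (hU : IsUnitaryGroup U) (hu : AEStronglyMeasurable u)
    (hb : ∀ᵐ s, s ∈ Ioo a T → ‖u s‖ ≤ K) (hab : a ≤ b) (hbT : b < T) :
    stateT U B T a u y₀ - stateT U B T b u y₀ = ∫ s in Ioo a b, U (T - s) (B (u s)) := by
  have hint := integrableOn_duhamel (T := T) (B := B) hU hu hb
  rw [stateT, stateT]
  rw [← Ioc_union_Ioo_eq_Ioo hab hbT] at hint ⊢
  rw [setIntegral_union (Ioc_disjoint_Ioi_same.mono_right Ioo_subset_Ioi_self) measurableSet_Ioo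
    (hint.mono_set subset_union_left) (hint.mono_set subset_union_right),
    integral_Ioc_eq_integral_Ioo]
  abel

theorem integral_duhamel_smul (l : ℝ) :
    ∫ s in Ioo τ T, U (T - s) (B ((l • u) s)) = l • ∫ s in Ioo τ T, U (T - s) (B (u s)) := by
  simp only [Pi.smul_apply, ContinuousLinearMap.map_smul_of_tower]
  exact integral_smul l _

theorem integral_duhamel_smul_add (l : ℝ)
    (h₁ : IntegrableOn (fun s => U (T - s) (B (u₁ s))) (Ioo τ T))
    (h₂ : IntegrableOn (fun s => U (T - s) (B (u₂ s))) (Ioo τ T)) :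
    ∫ s in Ioo τ T, U (T - s) (B ((l • u₁ + u₂) s)) =
      l • (∫ s in Ioo τ T, U (T - s) (B (u₁ s))) + ∫ s in Ioo τ T, U (T - s) (B (u₂ s)) := by
  simp only [Pi.add_apply, Pi.smul_apply, map_add, ContinuousLinearMap.map_smul_of_tower]
  rw [integral_add (f := fun s => l • U (T - s) (B (u₁ s))) (h₁.smul l) h₂, integral_smul]

theorem stateT_smul_add_smul_of_add_eq_one
    (h₁ : IntegrableOn (fun s => U (T - s) (B (u₁ s))) (Ioo τ T))
    (h₂ : IntegrableOn (fun s => U (T - s) (B (u₂ s))) (Ioo τ T)) (hab : a + b = 1) :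
    stateT U B T τ (a • u₁ + b • u₂) y₀ = a • stateT U B T τ u₁ y₀ + b • stateT U B T τ u₂ y₀ := by
  obtain rfl : b = 1 - a := by linarith
  have h₂' : IntegrableOn (fun s => U (T - s) (B (((1 - a) • u₂) s))) (Ioo τ T) := by
    simp only [Pi.smul_apply, ContinuousLinearMap.map_smul_of_tower]
    exact h₂.smul (1 - a)
  rw [stateT, integral_duhamel_smul_add a h₁ h₂', integral_duhamel_smul, stateT, stateT]
  module

end Duhamel

section Controllability

variable {E : Type*} [NormedAddCommGroup E] [InnerProductSpace ℂ E]
  {U : ℝ → E →L[ℂ] E} {B : E →L[ℂ] E} {u v : ℝ → E} {y₀ z_d : E} {T τ a m K ε : ℝ}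

theorem integral_duhamel_comp_sub [CompleteSpace E] (hU : IsUnitaryGroup U) (ham : a ≤ m) :
    ∫ s in Ioo a m, U (T - s) (B (u (s - a))) =
      U (T - m) (∫ σ in Ioo 0 (m - a), U (m - a - σ) (B (u σ))) := by
  rw [← ContinuousLinearMap.integral_comp_comm' _ (hU.toLinearIsometry (T - m)).antilipschitz]
  simp only [hU.apply_apply]
  rw [← integral_Ioc_eq_integral_Ioo, ← intervalIntegral.integral_of_le ham,
    ← integral_Ioc_eq_integral_Ioo, ← intervalIntegral.integral_of_le (sub_nonneg.2 ham),
    ← sub_self a, ← intervalIntegral.integral_comp_sub_right]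
  congr 1
  ext s
  ring_nf

theorem exists_steering_control [CompleteSpace E] (hU : IsUnitaryGroup U) (hEC : EC U B)
    (ham : a < m) (hmT : m ≤ T) :
    ∃ C > 0, ∀ ξ : E, ∃ c : ℝ → E, AEStronglyMeasurable c ∧ (∀ s ∉ Ioo a m, c s = 0) ∧
      (∀ᵐ s, ‖c s‖ ≤ C * ‖ξ‖) ∧ ∫ s in Ioo a T, U (T - s) (B (c s)) = ξ := by
  obtain ⟨C, hC, hctrl⟩ := hEC (m - a) (sub_pos.2 ham)
  refine ⟨C, hC, fun ξ => ?_⟩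
  obtain ⟨u, hum, hub, hu⟩ := hctrl 0 (U (-(T - m)) ξ)
  simp only [map_zero, sub_zero, hU.norm_apply] at hub
  rw [stateT, map_zero, zero_add] at hu
  have hshift := measurePreserving_sub_right volume a
  refine ⟨(Ioo a m).indicator fun s => u (s - a),
    (hum.comp_quasiMeasurePreserving hshift.quasiMeasurePreserving).indicator measurableSet_Ioo,
    fun s hs => indicator_of_notMem hs _, ?_, ?_⟩
  · filter_upwards [hshift.quasiMeasurePreserving.ae hub] with s hs
    by_cases hsm : s ∈ Ioo a m
    · rw [indicator_of_mem hsm]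
      exact hs ⟨sub_pos.2 hsm.1, sub_lt_sub_right hsm.2 a⟩
    · rw [indicator_of_notMem hsm, norm_zero]
      positivity
  · rw [integral_duhamel_indicator (Ioo_subset_Ioo_right hmT),
      integral_duhamel_comp_sub hU ham.le, hu, hU.apply_neg_apply]

theorem exists_contracting_control [CompleteSpace E] (hU : IsUnitaryGroup U) (hEC : EC U B)
    (ham : a < m) (hmT : m ≤ T) (hε : 0 < ε) (hv : AEStronglyMeasurable v)
    (hvb : ∀ᵐ s, s ∈ Ioo a T → ‖v s‖ ≤ K) :
    ∃ l ∈ Ico (0 : ℝ) 1, ∃ c : ℝ → E, AEStronglyMeasurable c ∧ (∀ s ∉ Ioo a m, c s = 0) ∧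
      (∀ᵐ s, ‖c s‖ ≤ ε) ∧
      stateT U B T a (l • v + c) y₀ - z_d = l • (stateT U B T a v y₀ - z_d) := by
  obtain ⟨C, hC, hsteer⟩ := exists_steering_control hU hEC ham hmT
  set ρ := ‖z_d - U T y₀‖
  set θ := min 1 (ε / (C * (ρ + 1)))
  have hθ : 0 < θ := lt_min one_pos (by positivity)
  have hθC : C * (θ * ρ) ≤ ε :=
    calc C * (θ * ρ) ≤ C * (ε / (C * (ρ + 1)) * (ρ + 1)) := by
          gcongr
          exacts [min_le_right _ _, le_add_of_nonneg_right zero_le_one]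
      _ = ε := by field_simp [(by positivity : (0 : ℝ) < ρ + 1).ne']
  obtain ⟨c, hcm, hc0, hcb, hcint⟩ := hsteer (θ • (z_d - U T y₀))
  refine ⟨1 - θ, ⟨sub_nonneg.2 (min_le_left _ _), sub_lt_self 1 hθ⟩, c, hcm, hc0, ?_, ?_⟩
  · filter_upwards [hcb] with s hs
    rw [norm_smul_of_nonneg hθ.le] at hs
    exact hs.trans hθC
  · have hcI := integrableOn_duhamel (a := a) (b := T) (T := T) (B := B) hU hcm
      (hcb.mono fun _ h _ => h)
    rw [stateT, integral_duhamel_smul_add _ (integrableOn_duhamel hU hv hvb) hcI, hcint, stateT]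
    module

theorem exists_mem_Ioo_norm_stateT_sub_le (hU : IsUnitaryGroup U) (hτT : τ < T)
    (hu : AEStronglyMeasurable u) (hub : ∀ᵐ s, s ∈ Ioo τ T → ‖u s‖ ≤ K) (hK : 0 ≤ K)
    {r : ℝ} (herr : ‖stateT U B T τ u y₀ - z_d‖ < r) :
    ∃ t ∈ Ioo τ T, ‖stateT U B T t u y₀ - z_d‖ ≤ r := by
  set e := ‖stateT U B T τ u y₀ - z_d‖
  set δ := min ((T - τ) / 2) ((r - e) / (‖B‖ * K + 1))
  have hδ : 0 < δ := lt_min (by linarith) (div_pos (by linarith) (by positivity))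
  have hδT : δ < T - τ := (min_le_left _ _).trans_lt (by linarith)
  have hshift : ‖stateT U B T (τ + δ) u y₀ - stateT U B T τ u y₀‖ ≤ ‖B‖ * K * δ := by
    rw [norm_sub_rev, stateT_sub_stateT hU hu hub (by linarith) (by linarith)]
    simpa using norm_integral_duhamel_le (T := T) hU
      (hub.mono fun s hs hmem => hs ⟨hmem.1, hmem.2.trans (by linarith)⟩) (by linarith : τ ≤ τ + δ)
  have hδe : ‖B‖ * K * δ ≤ r - e :=
    calc ‖B‖ * K * δ ≤ (‖B‖ * K + 1) * ((r - e) / (‖B‖ * K + 1)) := by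
          gcongr
          exacts [le_add_of_nonneg_right zero_le_one, min_le_right _ _]
      _ = r - e := by field_simp
  refine ⟨τ + δ, ⟨by linarith, by linarith⟩, ?_⟩
  linarith [norm_sub_le_norm_sub_add_norm_sub (stateT U B T (τ + δ) u y₀)
    (stateT U B T τ u y₀) z_d]

end Controllability

section Admissible

variable {E : Type*} [NormedAddCommGroup E] {u v : ℝ → E} {a b M τ T : ℝ}

theorem MemLinfty.add (hu : MemLinfty u a b) (hv : MemLinfty v a b) : MemLinfty (u + v) a b := by
  obtain ⟨c₁, hc₁⟩ := hu.2
  obtain ⟨c₂, hc₂⟩ := hv.2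
  refine ⟨hu.1.add hv.1, c₁ + c₂, ?_⟩
  filter_upwards [hc₁, hc₂] with t h₁ h₂ ht
  exact (norm_add_le _ _).trans (add_le_add (h₁ ht) (h₂ ht))

theorem MemLinfty.const_smul [NormedSpace ℝ E] (hu : MemLinfty u a b) (l : ℝ) :
    MemLinfty (l • u) a b := by
  obtain ⟨c, hc⟩ := hu.2
  refine ⟨hu.1.const_smul l, ‖l‖ * c, ?_⟩
  filter_upwards [hc] with t h ht
  rw [Pi.smul_apply, norm_smul]
  exact mul_le_mul_of_nonneg_left (h ht) (norm_nonneg l)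

theorem UadmSet_mono : Monotone fun τ => (UadmSet M τ T : Set (ℝ → E)) :=
  fun _ _ hle _ hu => ⟨hu.1, hu.2.mono fun _ h hs => h ⟨hle.trans_lt hs.1, hs.2⟩⟩

theorem convex_UadmSet [NormedSpace ℝ E] : Convex ℝ (UadmSet M τ T : Set (ℝ → E)) := by
  intro u₁ h₁ u₂ h₂ a b ha hb hab
  refine ⟨(h₁.1.const_smul a).add (h₂.1.const_smul b), ?_⟩
  filter_upwards [h₁.2, h₂.2] with s hs₁ hs₂ hs
  calc ‖a • u₁ s + b • u₂ s‖ ≤ a * ‖u₁ s‖ + b * ‖u₂ s‖ := by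
        rw [← norm_smul_of_nonneg ha, ← norm_smul_of_nonneg hb]
        exact norm_add_le _ _
    _ ≤ a * M + b * M := by gcongr; exacts [hs₁ hs, hs₂ hs]
    _ = M := by rw [← add_mul, hab, one_mul]

end Admissible

section TimeOptimal

variable {E : Type*} [NormedAddCommGroup E] [InnerProductSpace ℂ E]
  {U : ℝ → E →L[ℂ] E} {B : E →L[ℂ] E} {u v w : ℝ → E} {y₀ z_d : E} {T M r σ τ t : ℝ}

/-- `VadmSet U B y₀ z_d T M r = {v | ∃ σ, ReachesFrom U B y₀ z_d T M r σ v}`, and `tauOf` is the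
supremum of the `σ` with `ReachesFrom … σ v`. -/
def ReachesFrom (U : ℝ → E →L[ℂ] E) (B : E →L[ℂ] E) (y₀ z_d : E) (T M r σ : ℝ) (v : ℝ → E) :
    Prop :=
  σ ∈ Ico 0 T ∧ v ∈ UadmSet M σ T ∧ ‖stateT U B T σ v y₀ - z_d‖ ≤ r

theorem ReachesFrom.norm_free_sub_le (hU : IsUnitaryGroup U)
    (h : ReachesFrom U B y₀ z_d T M r σ v) : ‖U T y₀ - z_d‖ ≤ r + ‖B‖ * M * (T - σ) := by
  have := norm_stateT_sub_free_le (y₀ := y₀) (B := B) hU h.2.1.2 h.1.2.le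
  linarith [norm_sub_le_norm_sub_add_norm_sub (U T y₀) (stateT U B T σ v y₀) z_d,
    norm_sub_rev (U T y₀) (stateT U B T σ v y₀), h.2.2]

theorem ReachesFrom.norm_mul_pos (hU : IsUnitaryGroup U) (h : ReachesFrom U B y₀ z_d T M r σ v)
    (hr : r < ‖U T y₀ - z_d‖) : 0 < ‖B‖ * M :=
  pos_of_mul_pos_left (by linarith [h.norm_free_sub_le hU]) (sub_nonneg.2 h.1.2.le)

theorem ReachesFrom.pos (hU : IsUnitaryGroup U) (h : ReachesFrom U B y₀ z_d T M r σ v)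
    (hr : r < ‖U T y₀ - z_d‖) : 0 < M :=
  pos_of_mul_pos_right (h.norm_mul_pos hU hr) (norm_nonneg B)

theorem ReachesFrom.le_sub (hU : IsUnitaryGroup U) (h : ReachesFrom U B y₀ z_d T M r σ v)
    (hr : r < ‖U T y₀ - z_d‖) : σ ≤ T - (‖U T y₀ - z_d‖ - r) / (‖B‖ * M) := by
  rw [le_sub_comm, div_le_iff₀ (h.norm_mul_pos hU hr)]
  linarith [h.norm_free_sub_le hU]

theorem ReachesFrom.le_tauTP (h : ReachesFrom U B y₀ z_d T M r σ v) :
    σ ≤ tauTP U B y₀ z_d T M r := by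
  have hT : 0 ≤ T := h.1.1.trans h.1.2.le
  have htauOf : ∀ w, tauOf U B y₀ z_d T r w ≤ T := fun _ => Real.sSup_le (fun _ hx => hx.1.2.le) hT
  calc σ ≤ tauOf U B y₀ z_d T r v := le_csSup ⟨T, fun _ hx => hx.1.2.le⟩ ⟨h.1, h.2.2⟩
    _ ≤ tauTP U B y₀ z_d T M r :=
      le_csSup ⟨T, by rintro _ ⟨w, -, rfl⟩; exact htauOf w⟩ ⟨v, ⟨σ, h⟩, rfl⟩

theorem tauTP_le (ht : 0 ≤ t) (h : ∀ σ v, ReachesFrom U B y₀ z_d T M r σ v → σ ≤ t) :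
    tauTP U B y₀ z_d T M r ≤ t := by
  refine Real.sSup_le ?_ ht
  rintro _ ⟨v, ⟨τ, hv⟩, rfl⟩
  refine Real.sSup_le (fun σ hσ => ?_) ht
  rcases le_total σ τ with hle | hle
  · exact hle.trans (h τ v hv)
  · exact h σ v ⟨hσ.1, UadmSet_mono hle hv.2.1, hσ.2⟩

theorem ReachesFrom.tauTP_lt (hU : IsUnitaryGroup U) (h : ReachesFrom U B y₀ z_d T M r σ v)
    (hr : r < ‖U T y₀ - z_d‖) : tauTP U B y₀ z_d T M r < T :=
  (tauTP_le (h.1.1.trans (h.le_sub hU hr)) fun _ _ h' => h'.le_sub hU hr).trans_lt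
    (sub_lt_self T (div_pos (by linarith) (h.norm_mul_pos hU hr)))

theorem IsOptTP.reachesFrom_tauTP (hU : IsUnitaryGroup U) (hr : r < ‖U T y₀ - z_d‖)
    (h : IsOptTP U B y₀ z_d T M r u) :
    ReachesFrom U B y₀ z_d T M r (tauTP U B y₀ z_d T M r) u := by
  obtain ⟨⟨σ, hσ : ReachesFrom U B y₀ z_d T M r σ u⟩, herr⟩ := h
  exact ⟨⟨hσ.1.1.trans hσ.le_tauTP, hσ.tauTP_lt hU hr⟩, UadmSet_mono hσ.le_tauTP hσ.2.1, herr⟩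

theorem convex_reachesFrom (hU : IsUnitaryGroup U) :
    Convex ℝ {v | ReachesFrom U B y₀ z_d T M r σ v} := by
  intro v₁ h₁ v₂ h₂ a b ha hb hab
  refine ⟨h₁.1, convex_UadmSet h₁.2.1 h₂.2.1 ha hb hab, ?_⟩
  rw [stateT_smul_add_smul_of_add_eq_one (integrableOn_duhamel hU h₁.2.1.1.1 h₁.2.1.2)
    (integrableOn_duhamel hU h₂.2.1.1.1 h₂.2.1.2) hab, ← mem_closedBall_iff_norm]
  exact convex_closedBall z_d r (mem_closedBall_iff_norm.2 h₁.2.2)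
    (mem_closedBall_iff_norm.2 h₂.2.2) ha hb hab

theorem MNP_le_supNorm (hw : w ∈ WadmSet U B y₀ z_d T τ r) :
    MNP U B y₀ z_d T τ r ≤ supNorm w τ T :=
  csInf_le ⟨0, by rintro _ ⟨v, -, rfl⟩; exact supNorm_nonneg v τ T⟩ ⟨w, hw, rfl⟩

end TimeOptimal

section NormOptimal

variable {E : Type*} [NormedAddCommGroup E] [InnerProductSpace ℂ E] [CompleteSpace E]
  {U : ℝ → E →L[ℂ] E} {B : E →L[ℂ] E} {u v : ℝ → E} {y₀ z_d : E} {T M N r a b τ : ℝ}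

theorem ReachesFrom.MNP_lt (hU : IsUnitaryGroup U) (hEC : EC U B)
    (h : ReachesFrom U B y₀ z_d T M r b v) (hab : a < b) (hM : 0 < M) :
    MNP U B y₀ z_d T a r < M := by
  set v' := (Ioo b T).indicator v with hv'
  have hv'm : AEStronglyMeasurable v' := h.2.1.1.1.indicator measurableSet_Ioo
  have hv'b : ∀ᵐ s, ‖v' s‖ ≤ M := by
    filter_upwards [h.2.1.2] with s hs
    by_cases hsm : s ∈ Ioo b T
    · rw [hv', indicator_of_mem hsm]
      exact hs hsm
    · rw [hv', indicator_of_notMem hsm, norm_zero]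
      exact hM.le
  obtain ⟨l, hl, c, hcm, hc0, hcb, hstate⟩ := exists_contracting_control (y₀ := y₀) (z_d := z_d)
    hU hEC hab h.1.2.le (half_pos hM) hv'm (hv'b.mono fun _ hs _ => hs)
  have hwb : ∀ᵐ s, ‖(l • v' + c) s‖ ≤ max (l * M) (M / 2) := by
    filter_upwards [hv'b, hcb] with s hvs hc
    by_cases hs : s ∈ Ioo a b
    · have hv0 : v' s = 0 := indicator_of_notMem (fun h' => h'.1.not_gt hs.2) v
      rw [Pi.add_apply, Pi.smul_apply, hv0, smul_zero, zero_add]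
      exact le_max_of_le_right hc
    · rw [Pi.add_apply, hc0 s hs, add_zero, Pi.smul_apply, norm_smul_of_nonneg hl.1]
      exact le_max_of_le_left (mul_le_mul_of_nonneg_left hvs hl.1)
  have hw : l • v' + c ∈ WadmSet U B y₀ z_d T a r := by
    refine ⟨⟨(hv'm.const_smul l).add hcm, _, hwb.mono fun _ hs _ => hs⟩, ?_⟩
    rw [hstate, stateT_indicator hab.le, norm_smul_of_nonneg hl.1]
    exact (mul_le_of_le_one_left (norm_nonneg _) hl.2.le).trans h.2.2
  calc MNP U B y₀ z_d T a r ≤ supNorm (l • v' + c) a T := MNP_le_supNorm hw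
    _ ≤ max (l * M) (M / 2) :=
      supNorm_le (le_max_of_le_right (by positivity)) (hwb.mono fun _ hs _ => hs)
    _ < M := max_lt (mul_lt_of_lt_one_left hM hl.2) (half_lt_self hM)

theorem exists_reachesFrom_later (hU : IsUnitaryGroup U) (hEC : EC U B) (hr : 0 < r)
    (hτ : τ ∈ Ico 0 T) (hv : MemLinfty v 0 T) (hvb : ∀ᵐ s, s ∈ Ioo τ T → ‖v s‖ ≤ N)
    (hN : 0 ≤ N) (hNM : N < M) (herr : ‖stateT U B T τ v y₀ - z_d‖ ≤ r) :
    ∃ t > τ, ∃ w, ReachesFrom U B y₀ z_d T M r t w := by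
  obtain ⟨l, hl, c, hcm, -, hcb, hstate⟩ := exists_contracting_control (y₀ := y₀) (z_d := z_d)
    hU hEC hτ.2 le_rfl (half_pos (sub_pos.2 hNM)) hv.1 hvb
  have hwb : ∀ᵐ s, s ∈ Ioo τ T → ‖(l • v + c) s‖ ≤ M := by
    filter_upwards [hvb, hcb] with s hvs hc hs
    calc ‖l • v s + c s‖ ≤ l * N + (M - N) / 2 := (norm_add_le _ _).trans (add_le_add
          (by rw [norm_smul_of_nonneg hl.1]; exact mul_le_mul_of_nonneg_left (hvs hs) hl.1) hc)
      _ ≤ M := by nlinarith [hl.2]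
  have hwerr : ‖stateT U B T τ (l • v + c) y₀ - z_d‖ < r := by
    rw [hstate, norm_smul_of_nonneg hl.1]
    exact (mul_le_mul_of_nonneg_left herr hl.1).trans_lt (mul_lt_of_lt_one_left hr hl.2)
  obtain ⟨t, ht, hterr⟩ := exists_mem_Ioo_norm_stateT_sub_le hU hτ.2
    ((hv.1.const_smul l).add hcm) hwb (hN.trans hNM.le) hwerr
  exact ⟨t, ht.1, l • v + c, ⟨hτ.1.trans ht.1.le, ht.2⟩,
    ⟨(hv.const_smul l).add ⟨hcm, _, hcb.mono fun _ h _ => h⟩,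
      hwb.mono fun _ h hs => h ⟨ht.1.trans hs.1, hs.2⟩⟩, hterr⟩

theorem IsOptNP.isOptTP (hU : IsUnitaryGroup U) (hEC : EC U B) (hτ : τ ∈ Ico 0 T)
    (hr : r < ‖U T y₀ - z_d‖) (h : IsOptNP U B y₀ z_d T τ r u) :
    IsOptTP U B y₀ z_d T (MNP U B y₀ z_d T τ r) r u := by
  obtain ⟨⟨hu, herr⟩, hsup⟩ := h
  have hreach : ReachesFrom U B y₀ z_d T (MNP U B y₀ z_d T τ r) r τ u :=
    ⟨hτ, ⟨hu, hsup ▸ hu.ae_le_supNorm hτ.1⟩, herr⟩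
  have hM : 0 < MNP U B y₀ z_d T τ r := hreach.pos hU hr
  have htau : tauTP U B y₀ z_d T (MNP U B y₀ z_d T τ r) r = τ :=
    le_antisymm (tauTP_le hτ.1 fun _ _ hv => not_lt.1 fun hτσ => (hv.MNP_lt hU hEC hτσ hM).false)
      hreach.le_tauTP
  exact ⟨⟨τ, hreach⟩, by rw [htau]; exact herr⟩

theorem ReachesFrom.isOptNP_of_tauTP (hU : IsUnitaryGroup U) (hEC : EC U B) (hr₀ : 0 < r)
    (hr : r < ‖U T y₀ - z_d‖) (h : ReachesFrom U B y₀ z_d T M r (tauTP U B y₀ z_d T M r) u) :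
    IsOptNP U B y₀ z_d T (tauTP U B y₀ z_d T M r) r u := by
  set t₁ := tauTP U B y₀ z_d T M r
  have hM : 0 ≤ M := (h.pos hU hr).le
  have hmin : ∀ v ∈ WadmSet U B y₀ z_d T t₁ r, M ≤ supNorm v t₁ T := by
    rintro v ⟨hv, hverr⟩
    by_contra! hlt
    obtain ⟨t, ht, w, hw⟩ := exists_reachesFrom_later hU hEC hr₀ h.1 hv
      (hv.ae_le_supNorm h.1.1) (supNorm_nonneg v t₁ T) hlt hverr
    exact ht.not_ge hw.le_tauTP
  have huW : u ∈ WadmSet U B y₀ z_d T t₁ r := ⟨h.2.1.1, h.2.2⟩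
  have hsup : supNorm u t₁ T ≤ M := supNorm_le hM h.2.1.2
  exact ⟨huW, le_antisymm (hsup.trans (le_csInf ⟨_, u, huW, rfl⟩
    (by rintro _ ⟨v, hv, rfl⟩; exact hmin v hv))) (MNP_le_supNorm huW)⟩

end NormOptimal

section BangBang

variable {E : Type*} [NormedAddCommGroup E] [InnerProductSpace ℂ E]
  {U : ℝ → E →L[ℂ] E} {B : E →L[ℂ] E} {u g : ℝ → E} {y₀ z_d : E} {T M r τ : ℝ}

theorem convex_image_stateT (hU : IsUnitaryGroup U) :
    Convex ℝ ((fun g => stateT U B T τ g y₀) '' UadmSet M τ T) := by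
  rintro _ ⟨g₁, h₁, rfl⟩ _ ⟨g₂, h₂, rfl⟩ a b ha hb hab
  exact ⟨a • g₁ + b • g₂, convex_UadmSet h₁ h₂ ha hb hab,
    stateT_smul_add_smul_of_add_eq_one (integrableOn_duhamel hU h₁.1.1 h₁.2)
      (integrableOn_duhamel hU h₂.1.1 h₂.2) hab⟩

theorem re_inner_stateT [CompleteSpace E] (η : E)
    (hg : IntegrableOn (fun s => U (T - s) (B (g s))) (Ioo τ T)) :
    RCLike.re ⟪η, stateT U B T τ g y₀⟫_ℂ =
      RCLike.re ⟪η, U T y₀⟫_ℂ + ∫ s in Ioo τ T, RCLike.re ⟪η, U (T - s) (B (g s))⟫_ℂ := by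
  rw [stateT, inner_add_right, map_add, ← integral_inner hg, integral_re (hg.const_inner η)]

theorem IsUnitaryGroup.inner_duhamel (hU : IsUnitaryGroup U)
    (hB : (B : E →ₗ[ℂ] E).IsSymmetric) (T s : ℝ) (η x : E) :
    ⟪η, U (T - s) (B x)⟫_ℂ = ⟪B (U (s - T) η), x⟫_ℂ := by
  rw [hU.inner_apply_right, neg_sub]
  exact (hB _ _).symm

theorem UC.ae_ne_zero (hUC : UC U B) {η : E} (hη : η ≠ 0) (T : ℝ) :
    ∀ᵐ s, B (U (s - T) η) ≠ 0 :=
  (measurePreserving_sub_right volume T).quasiMeasurePreserving.ae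
    (measure_eq_zero_iff_ae_notMem.1 (hUC η hη))

theorem integral_re_inner_duhamel_le [CompleteSpace E] (hU : IsUnitaryGroup U)
    (hu : u ∈ UadmSet M τ T) (herr : ‖stateT U B T τ u y₀ - z_d‖ ≤ r)
    (hopt : ∀ g ∈ UadmSet M τ T, r ≤ ‖stateT U B T τ g y₀ - z_d‖) (hg : g ∈ UadmSet M τ T) :
    ∫ s in Ioo τ T, RCLike.re ⟪z_d - stateT U B T τ u y₀, U (T - s) (B (g s))⟫_ℂ ≤
      ∫ s in Ioo τ T, RCLike.re ⟪z_d - stateT U B T τ u y₀, U (T - s) (B (u s))⟫_ℂ := by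
  have hproj := re_inner_le_zero_of_forall_norm_sub_le (convex_image_stateT hU) ⟨u, hu, rfl⟩
    (by rintro _ ⟨g, hg, rfl⟩; rw [norm_sub_rev, norm_sub_rev z_d]; exact herr.trans (hopt g hg))
    ⟨g, hg, rfl⟩
  rw [inner_sub_right, map_sub, re_inner_stateT _ (integrableOn_duhamel hU hg.1.1 hg.2),
    re_inner_stateT _ (integrableOn_duhamel hU hu.1.1 hu.2)] at hproj
  linarith

theorem ae_norm_eq_of_forall_le_norm_stateT_sub [CompleteSpace E] (hU : IsUnitaryGroup U)
    (hB : (B : E →ₗ[ℂ] E).IsSymmetric) (hUC : UC U B) (hr : 0 < r) (hM : 0 ≤ M)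
    (hu : u ∈ UadmSet M τ T) (herr : ‖stateT U B T τ u y₀ - z_d‖ ≤ r)
    (hopt : ∀ g ∈ UadmSet M τ T, r ≤ ‖stateT U B T τ g y₀ - z_d‖) :
    ∀ᵐ s, s ∈ Ioo τ T → ‖u s‖ = M := by
  have hη : z_d - stateT U B T τ u y₀ ≠ 0 := by
    refine sub_ne_zero.2 fun h => ?_
    have := hopt u hu
    rw [← h, sub_self, norm_zero] at this
    linarith
  set φ : ℝ → E := fun s => B (U (s - T) (z_d - stateT U B T τ u y₀))
  have hφ : Continuous φ := B.continuous.comp ((hU.2.2.2 _).comp (continuous_sub_right T))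
  -- `q s` maximizes `re ⟪φ s, ·⟫` over the closed ball of radius `M`
  set q : ℝ → E := fun s => (M / ‖φ s‖) • φ s
  have hq_norm : ∀ s, ‖q s‖ ≤ M := fun s => norm_div_norm_smul_self_le hM (φ s)
  have hq : q ∈ UadmSet M τ T :=
    ⟨⟨((measurable_const.div hφ.norm.measurable).aestronglyMeasurable).smul
      hφ.aestronglyMeasurable, M, ae_of_all _ fun s _ => hq_norm s⟩,
      ae_of_all _ fun s _ => hq_norm s⟩
  have hint : ∀ g ∈ UadmSet M τ T, IntegrableOn
      (fun s => RCLike.re ⟪z_d - stateT U B T τ u y₀, U (T - s) (B (g s))⟫_ℂ) (Ioo τ T) :=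
    fun g hg => ((integrableOn_duhamel hU hg.1.1 hg.2).const_inner _).re
  have hle : (fun s => RCLike.re ⟪z_d - stateT U B T τ u y₀, U (T - s) (B (u s))⟫_ℂ)
      ≤ᵐ[volume.restrict (Ioo τ T)]
      fun s => RCLike.re ⟪z_d - stateT U B T τ u y₀, U (T - s) (B (q s))⟫_ℂ := by
    rw [EventuallyLE, ae_restrict_iff' measurableSet_Ioo]
    filter_upwards [hu.2] with s hs hmem
    rw [hU.inner_duhamel hB, hU.inner_duhamel hB, re_inner_div_norm_smul_self]
    exact (re_inner_le_norm _ _).trans (by rw [mul_comm]; gcongr; exact hs hmem)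
  have heq := (integral_eq_iff_of_ae_le (hint u hu) (hint q hq) hle).1
    (le_antisymm (integral_mono_ae (hint u hu) (hint q hq) hle)
      (integral_re_inner_duhamel_le hU hu herr hopt hq))
  rw [EventuallyEq, ae_restrict_iff' measurableSet_Ioo] at heq
  filter_upwards [heq, hUC.ae_ne_zero hη T, hu.2] with s hs hφs hus hmem
  rw [hU.inner_duhamel hB, hU.inner_duhamel hB, re_inner_div_norm_smul_self] at hs
  have hφpos : 0 < ‖φ s‖ := norm_pos_iff.2 hφs
  refine le_antisymm (hus hmem) (le_of_mul_le_mul_left ?_ hφpos)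
  calc ‖φ s‖ * M = RCLike.re ⟪φ s, u s⟫_ℂ := by rw [hs hmem, mul_comm]
    _ ≤ ‖φ s‖ * ‖u s‖ := re_inner_le_norm _ _

end BangBang

section SecondTypeTime

variable {E : Type*} [NormedAddCommGroup E] [InnerProductSpace ℂ E] [CompleteSpace E]
  {U : ℝ → E →L[ℂ] E} {B : E →L[ℂ] E} {u u₁ u₂ : ℝ → E} {y₀ z_d : E} {T M r : ℝ}

theorem ReachesFrom.ae_norm_eq_of_tauTP (hU : IsUnitaryGroup U)
    (hB : (B : E →ₗ[ℂ] E).IsSymmetric) (hUC : UC U B) (hr₀ : 0 < r) (hr : r < ‖U T y₀ - z_d‖)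
    (h : ReachesFrom U B y₀ z_d T M r (tauTP U B y₀ z_d T M r) u) :
    ∀ᵐ s, s ∈ Ioo (tauTP U B y₀ z_d T M r) T → ‖u s‖ = M := by
  have hM : 0 ≤ M := (h.pos hU hr).le
  refine ae_norm_eq_of_forall_le_norm_stateT_sub hU hB hUC hr₀ hM h.2.1 h.2.2
    fun g hg => not_lt.1 fun hlt => ?_
  obtain ⟨t, ht, hterr⟩ := exists_mem_Ioo_norm_stateT_sub_le hU h.1.2 hg.1.1 hg.2 hM hlt
  exact ht.1.not_ge
    (ReachesFrom.le_tauTP ⟨⟨h.1.1.trans ht.1.le, ht.2⟩, UadmSet_mono ht.1.le hg, hterr⟩)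

theorem ReachesFrom.ae_eq_of_tauTP (hU : IsUnitaryGroup U)
    (hB : (B : E →ₗ[ℂ] E).IsSymmetric) (hUC : UC U B) (hr₀ : 0 < r) (hr : r < ‖U T y₀ - z_d‖)
    (h₁ : ReachesFrom U B y₀ z_d T M r (tauTP U B y₀ z_d T M r) u₁)
    (h₂ : ReachesFrom U B y₀ z_d T M r (tauTP U B y₀ z_d T M r) u₂) :
    ∀ᵐ s, s ∈ Ioo (tauTP U B y₀ z_d T M r) T → u₁ s = u₂ s := by
  have hmid : ReachesFrom U B y₀ z_d T M r (tauTP U B y₀ z_d T M r)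
      ((1 / 2 : ℝ) • u₁ + (1 / 2 : ℝ) • u₂) :=
    convex_reachesFrom hU h₁ h₂ (by norm_num) (by norm_num) (by norm_num)
  filter_upwards [h₁.ae_norm_eq_of_tauTP hU hB hUC hr₀ hr, h₂.ae_norm_eq_of_tauTP hU hB hUC hr₀ hr,
    hmid.ae_norm_eq_of_tauTP hU hB hUC hr₀ hr] with s e₁ e₂ e hs
  by_contra hne
  let _ : InnerProductSpace ℝ E := InnerProductSpace.rclikeToReal ℂ E
  have hlt := (norm_midpoint_lt_iff ((e₁ hs).trans (e₂ hs).symm)).2 hne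
  rw [smul_add, ← Pi.smul_apply, ← Pi.smul_apply, ← Pi.add_apply, e hs, e₁ hs] at hlt
  exact hlt.false

end SecondTypeTime

theorem np_tp_equivalence_general
    (U : ℝ → H →L[ℂ] H) (B : H →L[ℂ] H) (hU : IsUnitaryGroup U) (hB : IsOrthProj B)
    (hEC : EC U B)
    (hUC : UC U B)
    (T : ℝ) (y₀ z_d : H) :
    (∀ τ ∈ Ico (0 : ℝ) T, ∀ r ∈ Ioo (0 : ℝ) ‖U T y₀ - z_d‖,
      ∀ u : ℝ → H, IsOptNP U B y₀ z_d T τ r u → IsOptTP U B y₀ z_d T (MNP U B y₀ z_d T τ r) r u) ∧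
    (∀ r ∈ Ioo (0 : ℝ) ‖U T y₀ - z_d‖, ∀ M : ℝ, MNP U B y₀ z_d T 0 r ≤ M →
      (∀ u : ℝ → H, IsOptTP U B y₀ z_d T M r u → IsOptNP U B y₀ z_d T (tauTP U B y₀ z_d T M r) r u) ∧
      (∀ u : ℝ → H, IsOptTP U B y₀ z_d T M r u →
        ∀ᵐ t : ℝ ∂volume, t ∈ Ioo (tauTP U B y₀ z_d T M r) T → ‖u t‖ = M) ∧
      (∀ u₁ u₂ : ℝ → H, IsOptTP U B y₀ z_d T M r u₁ → IsOptTP U B y₀ z_d T M r u₂ →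
        ∀ᵐ t : ℝ ∂volume, t ∈ Ioo (tauTP U B y₀ z_d T M r) T → u₁ t = u₂ t)) := by
  refine ⟨fun τ hτ r hr u hu => hu.isOptTP hU hEC hτ hr.2, fun r hr M _ => ?_⟩
  have hreach (u : ℝ → H) (hu : IsOptTP U B y₀ z_d T M r u) :
      ReachesFrom U B y₀ z_d T M r (tauTP U B y₀ z_d T M r) u :=
    hu.reachesFrom_tauTP hU hr.2
  exact ⟨fun u hu => (hreach u hu).isOptNP_of_tauTP hU hEC hr.1 hr.2,
    fun u hu => (hreach u hu).ae_norm_eq_of_tauTP hU hB.2.2 hUC hr.1 hr.2,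
    fun u₁ u₂ h₁ h₂ => (hreach u₁ h₁).ae_eq_of_tauTP hU hB.2.2 hUC hr.1 hr.2 (hreach u₂ h₂)⟩

theorem np_tp_equivalence
    (U : ℝ → H →L[ℂ] H) (B : H →L[ℂ] H) (hU : IsUnitaryGroup U) (hB : IsOrthProj B)
    (hEC : EC U B) (hECrev : EC (fun t => U (-t)) B)
    (hUC : UC U B)
    (T : ℝ) (hT : 0 < T) (y₀ z_d : H) (hrT : 0 < ‖U T y₀ - z_d‖) :
    (∀ τ ∈ Ico (0 : ℝ) T, ∀ r ∈ Ioo (0 : ℝ) ‖U T y₀ - z_d‖,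
      ∀ u : ℝ → H, IsOptNP U B y₀ z_d T τ r u → IsOptTP U B y₀ z_d T (MNP U B y₀ z_d T τ r) r u) ∧
    (∀ r ∈ Ioo (0 : ℝ) ‖U T y₀ - z_d‖, ∀ M : ℝ, MNP U B y₀ z_d T 0 r ≤ M →
      (∀ u : ℝ → H, IsOptTP U B y₀ z_d T M r u → IsOptNP U B y₀ z_d T (tauTP U B y₀ z_d T M r) r u) ∧
      (∀ u : ℝ → H, IsOptTP U B y₀ z_d T M r u →
        ∀ᵐ t : ℝ ∂volume, t ∈ Ioo (tauTP U B y₀ z_d T M r) T → ‖u t‖ = M) ∧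
      (∀ u₁ u₂ : ℝ → H, IsOptTP U B y₀ z_d T M r u₁ → IsOptTP U B y₀ z_d T M r u₂ →
        ∀ᵐ t : ℝ ∂volume, t ∈ Ioo (tauTP U B y₀ z_d T M r) T → u₁ t = u₂ t)) :=
  np_tp_equivalence_general U B hU hB hEC hUC T y₀ z_d
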